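/- arXiv:2412.08472 — 4 statements merged into one kernel-verified Lean document; each statement's English description precedes it below -/
import Mathlib

section
/- Consider the 3-node path network with measured function F(x) = f(w32 · f(w21 · x)) for the activation f(x) = a1·x + a2·x², where a1 ≠ 0 and a2 ≠ 0 are real numbers. If w21, w32, w̃21, w̃32 are nonzero real numbers such that f(w32 · f(w21 · x)) = f(w̃32 · f(w̃21 · x)) for every x ∈ ℝ, then w21 = w̃21 and w32 = w̃32 (i.e., the path network is identifiable by exciting its source and measuring its sink). -/
/-!
The measured function is a quartic polynomial in `x` whose coefficients of `x` and `x³` are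
`a1² · (w32 w21)` and `2 a1 a2² · (w32 w21)² w21`. Equal measured functions have equal
coefficients, so the product `w32 w21` is identified by the first one and then `w21` by the third.
-/

variable {K : Type*} [Field K]

theorem odd_coeffs_eq_of_quartic_eq [CharZero K] {c1 c2 c3 c4 d1 d2 d3 d4 : K}
    (h : ∀ x : K, c1 * x + c2 * x ^ 2 + c3 * x ^ 3 + c4 * x ^ 4
      = d1 * x + d2 * x ^ 2 + d3 * x ^ 3 + d4 * x ^ 4) :
    c1 = d1 ∧ c3 = d3 := by
  have hodd1 : (2 : K) * ((c1 - d1) + (c3 - d3)) = 0 := by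
    linear_combination h 1 - h (-1)
  have hodd2 : (4 : K) * ((c1 - d1) + 4 * (c3 - d3)) = 0 := by
    linear_combination h 2 - h (-2)
  have hsum1 : c1 - d1 + (c3 - d3) = 0 := (mul_eq_zero.mp hodd1).resolve_left two_ne_zero
  have hsum2 : c1 - d1 + 4 * (c3 - d3) = 0 := (mul_eq_zero.mp hodd2).resolve_left (by norm_num)
  have hc3_mul : (3 : K) * (c3 - d3) = 0 := by linear_combination hsum2 - hsum1
  have hc3_eq : c3 - d3 = 0 := (mul_eq_zero.mp hc3_mul).resolve_left three_ne_zero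
  constructor
  · linear_combination hsum1 - hc3_eq
  · linear_combination hc3_eq

theorem path_measured_eq_quartic {a1 a2 : K} {f : K → K} (hf : ∀ y, f y = a1 * y + a2 * y ^ 2)
    (w v x : K) :
    f (v * f (w * x)) = a1 ^ 2 * (v * w) * x
      + (a1 * a2 * v * w ^ 2 + a1 ^ 2 * a2 * v ^ 2 * w ^ 2) * x ^ 2
      + 2 * a1 * a2 ^ 2 * ((v * w) ^ 2 * w) * x ^ 3 + a2 ^ 3 * v ^ 2 * w ^ 4 * x ^ 4 := by
  simp only [hf]
  ring

theorem weights_eq_of_mul_eq {w v w' v' : K} (hw : w ≠ 0) (hv : v ≠ 0)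
    (h1 : v * w = v' * w') (h3 : (v * w) ^ 2 * w = (v' * w') ^ 2 * w') :
    w = w' ∧ v = v' := by
  have hw_eq : w = w' := by
    rw [← h1] at h3
    exact mul_left_cancel₀ (pow_ne_zero 2 (mul_ne_zero hv hw)) h3
  subst hw_eq
  exact ⟨rfl, mul_right_cancel₀ hw h1⟩

theorem stmt_0_general (a1 a2 : ℝ) (ha1 : a1 ≠ 0) (ha2 : a2 ≠ 0)
    (f : ℝ → ℝ) (hf : ∀ x : ℝ, f x = a1 * x + a2 * x ^ 2)
    (w21 w32 w21' w32' : ℝ)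
    (hw21 : w21 ≠ 0) (hw32 : w32 ≠ 0)
    (hFF : ∀ x : ℝ, f (w32 * f (w21 * x)) = f (w32' * f (w21' * x))) :
    w21 = w21' ∧ w32 = w32' := by
  obtain ⟨h1, h3⟩ := odd_coeffs_eq_of_quartic_eq fun x => by
    simpa only [path_measured_eq_quartic hf] using hFF x
  exact weights_eq_of_mul_eq hw21 hw32
    (mul_left_cancel₀ (pow_ne_zero 2 ha1) h1)
    (mul_left_cancel₀ (by positivity) h3)

/-- **Identifiability of the 3-node path network for a quadratic-plus-linear activation.**
For the activation `f x = a1 * x + a2 * x ^ 2` with `a1 ≠ 0` and `a2 ≠ 0`, if two consistent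
(nonzero) weight assignments of the path `1 → 2 → 3` produce the same measured function
`x ↦ f (w32 * f (w21 * x))`, then the weights coincide. -/
theorem stmt_0 (a1 a2 : ℝ) (ha1 : a1 ≠ 0) (ha2 : a2 ≠ 0)
    (f : ℝ → ℝ) (hf : ∀ x : ℝ, f x = a1 * x + a2 * x ^ 2)
    (w21 w32 w21' w32' : ℝ)
    (hw21 : w21 ≠ 0) (hw32 : w32 ≠ 0) (hw21' : w21' ≠ 0) (hw32' : w32' ≠ 0)
    (hFF : ∀ x : ℝ, f (w32 * f (w21 * x)) = f (w32' * f (w21' * x))) :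
    w21 = w21' ∧ w32 = w32' :=
  stmt_0_general a1 a2 ha1 ha2 f hf w21 w32 w21' w32' hw21 hw32 hFF
end

section
/- Let f : ℝ → ℝ be analytic with f(0) = 0, f′(0) ≠ 0 and f″(0) ≠ 0. If w21, w32, w̃21, w̃32 are nonzero real numbers such that f(w32 · f(w21 · x)) = f(w̃32 · f(w̃21 · x)) for all x in some neighborhood of 0, then w21 = w̃21 and w32 = w̃32. In other words, the 3-node path network is identifiable by exciting the source and measuring the sink for every analytic activation f with f(0) = 0 whose first two MacLaurin coefficients are nonzero. -/
/-!
Two measured functions that agree near `0` have the same derivatives at `0`. Write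
`F(x) = f(v f(u x))`, `a = f'(0)` and `b = f''(0)`. Since `f(0) = 0`, the chain rule gives
`F'(0) = a² v u` and `F''(0) = a b (a (v u)² + (v u) u)`. As `a ≠ 0`, `F'(0)` determines the
product `v u`; as `a b v u ≠ 0`, `F''(0)` then determines `u`, and finally `v = (v u) / u`.
-/

def measuredFunction (f : ℝ → ℝ) (w21 w32 : ℝ) : ℝ → ℝ :=
  fun x => f (w32 * f (w21 * x))

section Derivatives

variable {f : ℝ → ℝ} (u v : ℝ)

theorem hasDerivAt_measuredFunction (hf : Differentiable ℝ f) (x : ℝ) :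
    HasDerivAt (measuredFunction f u v)
      (deriv f (v * f (u * x)) * (v * (deriv f (u * x) * u))) x := by
  have hlin : HasDerivAt (fun y : ℝ => u * y) u x :=
    (hasDerivAt_id x).const_mul u |>.congr_deriv (mul_one u)
  have hinner : HasDerivAt (fun y => v * f (u * y)) (v * (deriv f (u * x) * u)) x :=
    ((hf _).hasDerivAt.comp x hlin).const_mul v
  exact (hf _).hasDerivAt.comp x hinner

theorem deriv_measuredFunction_zero (hf : Differentiable ℝ f) (hf0 : f 0 = 0) :
    deriv (measuredFunction f u v) 0 = deriv f 0 ^ 2 * (v * u) := by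
  rw [(hasDerivAt_measuredFunction u v hf 0).deriv]
  simp only [mul_zero, hf0]
  ring

theorem iteratedDeriv_two_measuredFunction_zero (hf : ContDiff ℝ 2 f) (hf0 : f 0 = 0) :
    iteratedDeriv 2 (measuredFunction f u v) 0 =
      iteratedDeriv 2 f 0 * deriv f 0 * (deriv f 0 * (v * u) ^ 2 + v * u * u) := by
  have hf₁ : Differentiable ℝ f := hf.differentiable (by norm_num)
  have hf₂ : Differentiable ℝ (deriv f) := (hf.deriv' (n := 1)).differentiable one_ne_zero
  have hlin : HasDerivAt (fun y : ℝ => u * y) u 0 :=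
    (hasDerivAt_id 0).const_mul u |>.congr_deriv (mul_one u)
  have hinner : HasDerivAt (fun y => v * f (u * y)) (v * (deriv f (u * 0) * u)) 0 :=
    ((hf₁ _).hasDerivAt.comp 0 hlin).const_mul v
  have houter : HasDerivAt (fun x => deriv f (v * f (u * x)))
      (deriv (deriv f) (v * f (u * 0)) * (v * (deriv f (u * 0) * u))) 0 :=
    (hf₂ _).hasDerivAt.comp 0 hinner
  have hfactor : HasDerivAt (fun x => v * (deriv f (u * x) * u))
      (v * (deriv (deriv f) (u * 0) * u * u)) 0 :=
    (((hf₂ _).hasDerivAt.comp 0 hlin).mul_const u).const_mul v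
  have hderiv : deriv (measuredFunction f u v) =
      fun x => deriv f (v * f (u * x)) * (v * (deriv f (u * x) * u)) :=
    funext fun x => (hasDerivAt_measuredFunction u v hf₁ x).deriv
  rw [iteratedDeriv_succ, iteratedDeriv_one, hderiv, (houter.fun_mul hfactor).deriv,
    iteratedDeriv_succ, iteratedDeriv_one]
  simp only [mul_zero, hf0]
  ring

end Derivatives

theorem path_weights_eq_of_derivs_eq {a b u v u' v' : ℝ} (ha : a ≠ 0) (hb : b ≠ 0)
    (hu : u ≠ 0) (hv : v ≠ 0)
    (h₁ : a ^ 2 * (v * u) = a ^ 2 * (v' * u'))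
    (h₂ : b * a * (a * (v * u) ^ 2 + v * u * u) = b * a * (a * (v' * u') ^ 2 + v' * u' * u')) :
    u = u' ∧ v = v' := by
  have hprod : v * u = v' * u' := mul_left_cancel₀ (pow_ne_zero 2 ha) h₁
  rw [← hprod] at h₂
  have hu' : u = u' := mul_left_cancel₀ (mul_ne_zero hv hu)
    (add_left_cancel (mul_left_cancel₀ (mul_ne_zero hb ha) h₂))
  subst hu'
  exact ⟨rfl, mul_right_cancel₀ hu hprod⟩

theorem stmt_3_general (f : ℝ → ℝ) (hf : ∀ x : ℝ, AnalyticAt ℝ f x) (hf0 : f 0 = 0)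
    (hf1 : deriv f 0 ≠ 0) (hf2 : iteratedDeriv 2 f 0 ≠ 0)
    (w21 w32 w21' w32' : ℝ)
    (hw21 : w21 ≠ 0) (hw32 : w32 ≠ 0)
    (hFF : ∀ᶠ x in nhds (0 : ℝ), f (w32 * f (w21 * x)) = f (w32' * f (w21' * x))) :
    w21 = w21' ∧ w32 = w32' := by
  have hf' : ContDiff ℝ 2 f := AnalyticOnNhd.contDiff fun x _ => hf x
  have hf₁ : Differentiable ℝ f := hf'.differentiable (by norm_num)
  have hEq : measuredFunction f w21 w32 =ᶠ[nhds 0] measuredFunction f w21' w32' := hFF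
  have h₁ := hEq.deriv_eq
  have h₂ := hEq.iteratedDeriv_eq 2
  rw [deriv_measuredFunction_zero _ _ hf₁ hf0, deriv_measuredFunction_zero _ _ hf₁ hf0] at h₁
  rw [iteratedDeriv_two_measuredFunction_zero _ _ hf' hf0,
    iteratedDeriv_two_measuredFunction_zero _ _ hf' hf0] at h₂
  exact path_weights_eq_of_derivs_eq hf1 hf2 hw21 hw32 h₁ h₂

/-- **Identifiability of the 3-node path network for generic analytic activations.**
Let `f` be analytic on `ℝ` with `f 0 = 0`, `f' 0 ≠ 0` and `f'' 0 ≠ 0` (i.e. its first two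
MacLaurin coefficients are nonzero). If two consistent (nonzero) weight assignments of the
path `1 → 2 → 3` produce measured functions that agree on some neighborhood of `0`, then the
weights coincide. -/
theorem stmt_3 (f : ℝ → ℝ) (hf : ∀ x : ℝ, AnalyticAt ℝ f x) (hf0 : f 0 = 0)
    (hf1 : deriv f 0 ≠ 0) (hf2 : iteratedDeriv 2 f 0 ≠ 0)
    (w21 w32 w21' w32' : ℝ)
    (hw21 : w21 ≠ 0) (hw32 : w32 ≠ 0) (hw21' : w21' ≠ 0) (hw32' : w32' ≠ 0)
    (hFF : ∀ᶠ x in nhds (0 : ℝ), f (w32 * f (w21 * x)) = f (w32' * f (w21' * x))) :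
    w21 = w21' ∧ w32 = w32' :=
  stmt_3_general f hf hf0 hf1 hf2 w21 w32 w21' w32' hw21 hw32 hFF
end

section
/- (Lemma on exponential asymptotics, Lemma 4) Let a fully-connected layered feed-forward network of depth L with one source and one sink have activation f(x) = e^x − 1 and weight family W ∈ W_o. Then: (i) for every layer l ∈ {0,…,L} and every node i ∈ N^l, F^l_i(x) → +∞ as x → +∞; and (ii) for every l ∈ {1,…,L}, every i ∈ N^l and every j ∈ N^{l−1}, the ratio (Σ_{k ∈ N^{l−1}, k ≥ j} w^l_{ik} F^{l−1}_k(x)) / (w^l_{ij} F^{l−1}_j(x)) tends to 1 as x → +∞; equivalently Σ_{k ≥ j} w^l_{ik} F^{l−1}_k(x) = w^l_{ij} F^{l−1}_j(x)(1 + o(1)) as x → +∞. -/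
open Finset Filter

/-- Node outputs of the fully-connected layered feed-forward network with activation
`f x = e^x - 1` and layer sizes `n 0, …, n L`: `expOut n w 0 i x = x` (the source) and
`expOut n w (l+1) i x = exp (∑_{j < n l} w^{l+1}_{ij} · expOut n w l j x) - 1`, where
`w (l+1) i j` is the weight of the edge from node `j` of layer `l` to node `i` of layer
`l + 1` (nodes are numbered `0, …, n l - 1`; the "first" node of a layer is node `0`). -/
noncomputable def expOut (n : ℕ → ℕ) (w : ℕ → ℕ → ℕ → ℝ) : ℕ → ℕ → ℝ → ℝ
  | 0, _, x => x
  | l + 1, i, x =>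
      Real.exp (∑ j ∈ Finset.range (n l), w (l + 1) i j * expOut n w l j x) - 1

/-- The class `W_o` of weight families: all weights are positive and, in each layer and for
each source node `j`, the weights are strictly decreasing in the destination node index
(`w^l_{1j} > w^l_{2j} > … > w^l_{n_l j}` in 1-based notation). -/
def Wo (L : ℕ) (n : ℕ → ℕ) (w : ℕ → ℕ → ℕ → ℝ) : Prop :=
  (∀ l < L, ∀ i < n (l + 1), ∀ j < n l, 0 < w (l + 1) i j) ∧
  (∀ l < L, ∀ j < n l, ∀ i i' : ℕ, i < i' → i' < n (l + 1) → w (l + 1) i' j < w (l + 1) i j)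

/-!
Induction on the layers: every preactivation `∑ⱼ w_{ij} F_j` is a positive combination of
outputs tending to `+∞`, hence so is `F_i = e^{(…)} - 1`. For `j < k` in the same layer the
weights satisfy `w_{kt} < w_{jt}`, so the preactivations `B` of `k` and `C` of `j` satisfy
`C - B → +∞`, and `(e^B - 1) / (e^C - 1) = (e^{-(C-B)} - e^{-C}) / (1 - e^{-C}) → 0`.
Thus in a tail sum `∑_{k ≥ j} w_{ik} F_k` every term but the first is negligible against it.
-/

open Topology

lemma tendsto_sum_mul_atTop {ι α : Type*} {l : Filter α} {s : Finset ι} (hs : s.Nonempty)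
    {c : ι → ℝ} {f : ι → α → ℝ} (hc : ∀ t ∈ s, 0 < c t)
    (hf : ∀ t ∈ s, Tendsto (f t) l atTop) :
    Tendsto (fun x => ∑ t ∈ s, c t * f t x) l atTop := by
  obtain ⟨t₀, ht₀⟩ := hs
  refine tendsto_atTop_mono' l ?_ ((hf t₀ ht₀).const_mul_atTop (hc t₀ ht₀))
  have hnonneg : ∀ᶠ x in l, ∀ t ∈ s, 0 ≤ c t * f t x := by
    rw [eventually_all_finset]
    exact fun t ht => ((hf t ht).eventually_ge_atTop 0).mono fun x hx =>
      mul_nonneg (hc t ht).le hx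
  filter_upwards [hnonneg] with x hx
  exact single_le_sum hx ht₀

lemma tendsto_exp_sub_one_div_exp_sub_one {α : Type*} {l : Filter α} {B C : α → ℝ}
    (hC : Tendsto C l atTop) (hCB : Tendsto (fun x => C x - B x) l atTop) :
    Tendsto (fun x => (Real.exp (B x) - 1) / (Real.exp (C x) - 1)) l (𝓝 0) := by
  have hexp {u : α → ℝ} (hu : Tendsto u l atTop) :
      Tendsto (fun x => Real.exp (-u x)) l (𝓝 0) :=
    Real.tendsto_exp_neg_atTop_nhds_zero.comp hu
  have hlim : Tendsto (fun x => (Real.exp (-(C x - B x)) - Real.exp (-C x)) /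
      (1 - Real.exp (-C x))) l (𝓝 ((0 - 0) / (1 - 0))) :=
    ((hexp hCB).sub (hexp hC)).div (tendsto_const_nhds.sub (hexp hC)) (by norm_num)
  rw [sub_zero, zero_div] at hlim
  refine hlim.congr fun x => ?_
  rw [← mul_div_mul_right _ _ (Real.exp_pos (C x)).ne', sub_mul, sub_mul, one_mul,
    ← Real.exp_add, ← Real.exp_add, neg_add_cancel, Real.exp_zero, neg_sub, sub_add_cancel]

lemma tendsto_sum_div_nhds_one {ι α : Type*} [DecidableEq ι] {l : Filter α} {s : Finset ι}
    {j : ι} (hj : j ∈ s) {g : ι → α → ℝ} (hgj : ∀ᶠ x in l, g j x ≠ 0)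
    (h : ∀ k ∈ s.erase j, Tendsto (fun x => g k x / g j x) l (𝓝 0)) :
    Tendsto (fun x => (∑ k ∈ s, g k x) / g j x) l (𝓝 1) := by
  have hlim : Tendsto (fun x => 1 + ∑ k ∈ s.erase j, g k x / g j x) l (𝓝 (1 + 0)) :=
    tendsto_const_nhds.add (by simpa using tendsto_finsetSum _ h)
  rw [add_zero] at hlim
  refine hlim.congr' ?_
  filter_upwards [hgj] with x hx
  rw [← add_sum_erase s _ hj, add_div, div_self hx, sum_div]

section Network

variable {L : ℕ} {n : ℕ → ℕ} {w : ℕ → ℕ → ℕ → ℝ}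

lemma tendsto_expOut_atTop (hpos : ∀ l ≤ L, 0 < n l) (hw : Wo L n w) {l : ℕ} (hl : l ≤ L)
    {i : ℕ} (hi : i < n l) : Tendsto (expOut n w l i) atTop atTop := by
  induction l generalizing i with
  | zero => exact tendsto_id
  | succ m ih =>
    have hm : m < L := hl
    have hpre : Tendsto (fun x => ∑ t ∈ range (n m), w (m + 1) i t * expOut n w m t x)
        atTop atTop :=
      tendsto_sum_mul_atTop (nonempty_range_iff.2 (hpos m hm.le).ne')
        (fun t ht => hw.1 m hm i hi t (mem_range.1 ht))
        (fun t ht => ih hm.le (mem_range.1 ht))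
    exact tendsto_atTop_add_const_right atTop (-1) (Real.tendsto_exp_atTop.comp hpre)

lemma tendsto_sum_mul_expOut_atTop (hpos : ∀ l ≤ L, 0 < n l) (hw : Wo L n w) {m : ℕ}
    (hm : m < L) {c : ℕ → ℝ} (hc : ∀ t < n m, 0 < c t) :
    Tendsto (fun x => ∑ t ∈ range (n m), c t * expOut n w m t x) atTop atTop :=
  tendsto_sum_mul_atTop (nonempty_range_iff.2 (hpos m hm.le).ne')
    (fun t ht => hc t (mem_range.1 ht))
    (fun _ ht => tendsto_expOut_atTop hpos hw hm.le (mem_range.1 ht))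

lemma tendsto_expOut_div_expOut (hn0 : n 0 = 1) (hpos : ∀ l ≤ L, 0 < n l) (hw : Wo L n w)
    {l : ℕ} (hl : l ≤ L) {j k : ℕ} (hjk : j < k) (hk : k < n l) :
    Tendsto (fun x => expOut n w l k x / expOut n w l j x) atTop (𝓝 0) := by
  cases l with
  | zero => omega
  | succ m =>
    have hm : m < L := hl
    have hj : j < n (m + 1) := hjk.trans hk
    refine tendsto_exp_sub_one_div_exp_sub_one
      (tendsto_sum_mul_expOut_atTop hpos hw hm fun t ht => hw.1 m hm j hj t ht) ?_
    refine (tendsto_sum_mul_expOut_atTop hpos hw hm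
      fun t ht => sub_pos.2 (hw.2 m hm t ht j k hjk hk)).congr fun x => ?_
    simp only [sub_mul, sum_sub_distrib]

end Network

theorem stmt_11_general (L : ℕ) (n : ℕ → ℕ) (hn0 : n 0 = 1)
    (hpos : ∀ l ≤ L, 0 < n l) (w : ℕ → ℕ → ℕ → ℝ) (hw : Wo L n w) :
    (∀ l ≤ L, ∀ i < n l,
      Tendsto (fun x => expOut n w l i x) atTop atTop) ∧
    (∀ l < L, ∀ i < n (l + 1), ∀ j < n l,
      Tendsto
        (fun x => (∑ k ∈ Finset.Ico j (n l), w (l + 1) i k * expOut n w l k x) /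
          (w (l + 1) i j * expOut n w l j x))
        atTop (nhds 1)) := by
  refine ⟨fun l hl i hi => tendsto_expOut_atTop hpos hw hl hi, fun l hl i hi j hj => ?_⟩
  refine tendsto_sum_div_nhds_one (mem_Ico.2 ⟨le_rfl, hj⟩) ?_ fun k hk => ?_
  · filter_upwards [(tendsto_expOut_atTop hpos hw hl.le hj).eventually_gt_atTop 0] with x hx
    exact (mul_pos (hw.1 l hl i hi j hj) hx).ne'
  · obtain ⟨hjk, hkn⟩ : j < k ∧ k < n l := by simpa using hk
    have hratio := (tendsto_expOut_div_expOut hn0 hpos hw hl.le hjk hkn).const_mul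
      (w (l + 1) i k / w (l + 1) i j)
    rw [mul_zero] at hratio
    exact hratio.congr fun x => by rw [mul_div_mul_comm]

/-- **(Lemma 4, lemma1: exponential asymptotics).** For a fully-connected layered
feed-forward network of depth `L ≥ 1` with one source and one sink, activation
`f x = e^x - 1` and weight family `W ∈ W_o`: (i) every node output tends to `+∞` as
`x → +∞`; and (ii) for every layer `l + 1`, node `i` of layer `l + 1` and node `j` of layer
`l`, the tail sum `∑_{k ≥ j} w^{l+1}_{ik} F^l_k (x)` is `w^{l+1}_{ij} F^l_j (x) (1 + o(1))`,
i.e. their ratio tends to `1` as `x → +∞`. -/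
theorem stmt_11 (L : ℕ) (hL : 1 ≤ L) (n : ℕ → ℕ) (hn0 : n 0 = 1) (hnL : n L = 1)
    (hpos : ∀ l ≤ L, 0 < n l) (w : ℕ → ℕ → ℕ → ℝ) (hw : Wo L n w) :
    (∀ l ≤ L, ∀ i < n l,
      Tendsto (fun x => expOut n w l i x) atTop atTop) ∧
    (∀ l < L, ∀ i < n (l + 1), ∀ j < n l,
      Tendsto
        (fun x => (∑ k ∈ Finset.Ico j (n l), w (l + 1) i k * expOut n w l k x) /
          (w (l + 1) i j * expOut n w l j x))
        atTop (nhds 1)) :=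
  stmt_11_general L n hn0 hpos w hw
end

section
/- (Recursive identification step, later rows) Let a fully-connected layered feed-forward network of depth L with one source and one sink have activation f(x) = e^x − 1, and let W, W̃ ∈ W_o be weight families whose measured functions satisfy F_W = F_{W̃}. Fix l ∈ {1,…,L−1}, i ∈ N^l with i > 1, and j ∈ N^{l−1}. If w^{l+1}_{1i'} = w̃^{l+1}_{1i'} and w^l_{i'j'} = w̃^l_{i'j'} for all i' < i and all j' ∈ N^{l−1}, and w^l_{ij'} = w̃^l_{ij'} for all j' < j, and w^{l'}_{kk'} = w̃^{l'}_{kk'} for all l' < l and all k, k', then w^l_{ij} = w̃^l_{ij}. -/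
open Finset Filter

/-!
Suppose `w̃^l_{ij} < w^l_{ij}`. Everything below that weight agrees, so the pre-activations of
node `i` of layer `l` differ by `(w^l_{ij} - w̃^l_{ij}) F_j` plus a combination of the outputs
`F_{j'}`, `j' > j`, of layer `l - 1`. In a `W_o` network `F_j` dominates each such `F_{j'}` by
any constant factor, since `exp` turns a diverging gap of pre-activations into a diverging ratio;
hence node `i` of `W` dominates node `i` of `W̃`. The first node of layer `l + 1` receives equal
contributions from the nodes `i' < i`, and outputs decrease in the node index, so it inherits
the domination; so does the first node of every later layer, up to the sink, where the
domination contradicts `F_W = F_W̃`.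
-/

open Real

/-- `t` ranges over all reals, so the functions dominated by `f` form a linear subspace, and
`t = 0` says that `f` itself tends to infinity. -/
def Dominates (f g : ℝ → ℝ) : Prop :=
  ∀ t : ℝ, Tendsto (fun x => f x - t * g x) atTop atTop

namespace Dominates

variable {f g h : ℝ → ℝ}

theorem tendsto (hfg : Dominates f g) : Tendsto f atTop atTop := by
  simpa using hfg 0

theorem of_tendsto_zero (hf : Tendsto f atTop atTop) : Dominates f fun _ => 0 := fun _ => by
  simpa using hf

theorem const_mul (hfg : Dominates f g) (c : ℝ) : Dominates f fun x => c * g x := fun t => by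
  simpa only [mul_assoc] using hfg (t * c)

theorem add (hfg : Dominates f g) (hfh : Dominates f h) : Dominates f fun x => g x + h x :=
  fun t => (((hfg (2 * t)).atTop_add_atTop (hfh (2 * t))).const_mul_atTop one_half_pos).congr
    fun x => by ring

theorem sum {ι : Type*} {s : Finset ι} {g : ι → ℝ → ℝ} (hf : Tendsto f atTop atTop)
    (hfg : ∀ i ∈ s, Dominates f (g i)) : Dominates f fun x => ∑ i ∈ s, g i x := by
  classical
  induction s using Finset.induction_on with
  | empty => simpa only [sum_empty] using of_tendsto_zero hf
  | insert a s ha ih =>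
    simp only [sum_insert ha]
    exact (hfg a (mem_insert_self a s)).add (ih fun i hi => hfg i (mem_insert_of_mem hi))

theorem tendsto_const_mul_add (hfg : Dominates f g) {c : ℝ} (hc : 0 < c) (d : ℝ) :
    Tendsto (fun x => c * f x + d * g x) atTop atTop :=
  ((hfg (-d / c)).const_mul_atTop hc).congr fun x => by field_simp; ring

end Dominates

theorem not_dominates_self (f : ℝ → ℝ) : ¬ Dominates f f := fun hf =>
  not_tendsto_const_atTop (0 : ℝ) atTop (by simpa using hf 1)

theorem dominates_exp_sub_one {f g : ℝ → ℝ} (hfg : Tendsto (fun x => f x - g x) atTop atTop)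
    (hg : ∀ᶠ x in atTop, 0 ≤ g x) :
    Dominates (fun x => exp (f x) - 1) (fun x => exp (g x) - 1) := by
  intro t
  have hgap := tendsto_exp_atTop.comp hfg
  refine tendsto_atTop_mono' _ ?_ (tendsto_atTop_add_const_right _ (-1) hgap)
  filter_upwards [hg, hgap.eventually_ge_atTop t] with x hgx hgapx
  simp only [Function.comp_apply] at hgapx ⊢
  have hexp_g : 1 ≤ exp (g x) := one_le_exp hgx
  have hexp_f : exp (f x) = exp (g x) * exp (f x - g x) := by rw [← exp_add]; ring_nf
  nlinarith [mul_nonneg (sub_nonneg.2 hexp_g) (sub_nonneg.2 hgapx)]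

theorem sum_range_sub_sum_range_eq_sum_Ico {M : Type*} [AddCommGroup M] {f g : ℕ → M}
    {k N : ℕ} (hk : k ≤ N) (hfg : ∀ i < k, f i = g i) :
    ∑ i ∈ range N, f i - ∑ i ∈ range N, g i = ∑ i ∈ Ico k N, (f i - g i) := by
  rw [← sum_sub_distrib, range_eq_Ico, ← sum_Ico_consecutive _ (Nat.zero_le k) hk,
    sum_eq_zero fun i hi => by rw [hfg i (mem_Ico.1 hi).2, sub_self], zero_add]

section Network

variable {L : ℕ} {n : ℕ → ℕ} {w w' : ℕ → ℕ → ℕ → ℝ}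

theorem expOut_succ (n : ℕ → ℕ) (w : ℕ → ℕ → ℕ → ℝ) (l i : ℕ) :
    expOut n w (l + 1) i =
      fun x => exp (∑ j ∈ range (n l), w (l + 1) i j * expOut n w l j x) - 1 :=
  rfl

theorem Wo.weight_nonneg (hw : Wo L n w) :
    ∀ l < L, ∀ i < n (l + 1), ∀ j < n l, 0 ≤ w (l + 1) i j :=
  fun l hl i hi j hj => (hw.1 l hl i hi j hj).le

theorem Wo.weight_antitone (hw : Wo L n w) {l : ℕ} (hl : l < L) {j : ℕ} (hj : j < n l)
    {i i' : ℕ} (hii' : i ≤ i') (hi' : i' < n (l + 1)) : w (l + 1) i' j ≤ w (l + 1) i j := by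
  rcases hii'.eq_or_lt with rfl | hlt
  · exact le_rfl
  · exact (hw.2 l hl j hj i i' hlt hi').le

theorem expOut_nonneg (hw : ∀ l < L, ∀ i < n (l + 1), ∀ j < n l, 0 ≤ w (l + 1) i j)
    {m : ℕ} (hm : m ≤ L) {k : ℕ} (hk : k < n m) {x : ℝ} (hx : 0 ≤ x) : 0 ≤ expOut n w m k x := by
  induction m generalizing k with
  | zero => exact hx
  | succ m ih =>
    have hpre : 0 ≤ ∑ j ∈ range (n m), w (m + 1) k j * expOut n w m j x :=
      sum_nonneg fun j hj =>
        mul_nonneg (hw m hm k hk j (mem_range.1 hj)) (ih (by omega) (mem_range.1 hj))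
    simpa [expOut_succ] using one_le_exp hpre

theorem sum_mul_expOut_nonneg (hw : ∀ l < L, ∀ i < n (l + 1), ∀ j < n l, 0 ≤ w (l + 1) i j)
    {m : ℕ} (hm : m ≤ L) {v : ℕ → ℝ} (hv : ∀ j < n m, 0 ≤ v j) {x : ℝ} (hx : 0 ≤ x) :
    0 ≤ ∑ j ∈ range (n m), v j * expOut n w m j x :=
  sum_nonneg fun j hj =>
    mul_nonneg (hv j (mem_range.1 hj)) (expOut_nonneg hw hm (mem_range.1 hj) hx)

theorem expOut_antitone (hw : Wo L n w) {m : ℕ} (hm : m ≤ L) {k k' : ℕ} (hkk' : k ≤ k')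
    (hk' : k' < n m) {x : ℝ} (hx : 0 ≤ x) : expOut n w m k' x ≤ expOut n w m k x := by
  cases m with
  | zero => exact le_rfl
  | succ m =>
    simp only [expOut_succ]
    gcongr with j hj
    · exact expOut_nonneg hw.weight_nonneg (by omega) (mem_range.1 hj) hx
    · exact hw.weight_antitone hm (mem_range.1 hj) hkk' hk'

theorem tendsto_expOut (hpos : ∀ l ≤ L, 0 < n l)
    (hw : ∀ l < L, ∀ i < n (l + 1), ∀ j < n l, 0 < w (l + 1) i j) {m : ℕ} (hm : m ≤ L) {k : ℕ}
    (hk : k < n m) : Tendsto (expOut n w m k) atTop atTop := by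
  induction m generalizing k with
  | zero => exact tendsto_id
  | succ m ih =>
    have h0 : 0 < n m := hpos m (by omega)
    have hpre : Tendsto (fun x => ∑ j ∈ range (n m), w (m + 1) k j * expOut n w m j x)
        atTop atTop := by
      refine tendsto_atTop_mono' _ ?_ ((ih (by omega) h0).const_mul_atTop (hw m hm k hk 0 h0))
      filter_upwards [eventually_ge_atTop 0] with x hx
      exact single_le_sum (f := fun j => w (m + 1) k j * expOut n w m j x)
        (fun j hj => mul_nonneg (hw m hm k hk j (mem_range.1 hj)).le
          (expOut_nonneg (fun l hl i hi j hj => (hw l hl i hi j hj).le) (by omega)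
            (mem_range.1 hj) hx))
        (mem_range.2 h0)
    rw [expOut_succ]
    exact tendsto_atTop_add_const_right _ (-1) (tendsto_exp_atTop.comp hpre)

theorem expOut_succ_congr {m i : ℕ} (hprev : ∀ k < n m, expOut n w m k = expOut n w' m k)
    (hrow : ∀ k < n m, w (m + 1) i k = w' (m + 1) i k) :
    expOut n w (m + 1) i = expOut n w' (m + 1) i := by
  simp only [expOut_succ]
  funext x
  congr 2
  exact sum_congr rfl fun k hk => by rw [hrow k (mem_range.1 hk), hprev k (mem_range.1 hk)]

theorem expOut_congr {l : ℕ}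
    (h : ∀ m < l, ∀ k < n (m + 1), ∀ k' < n m, w (m + 1) k k' = w' (m + 1) k k')
    {m : ℕ} (hm : m ≤ l) {k : ℕ} (hk : k < n m) : expOut n w m k = expOut n w' m k := by
  induction m generalizing k with
  | zero => rfl
  | succ m ih => exact expOut_succ_congr (fun k' hk' => ih (by omega) hk') (h m hm k hk)

theorem dominates_expOut_of_lt (hn0 : n 0 = 1) (hpos : ∀ l ≤ L, 0 < n l) (hw : Wo L n w)
    {m : ℕ} (hm : m ≤ L) {a b : ℕ} (hab : a < b) (hb : b < n m) :
    Dominates (expOut n w m a) (expOut n w m b) := by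
  cases m with
  | zero => omega
  | succ m =>
    have h0 : 0 < n m := hpos m (by omega)
    rw [expOut_succ, expOut_succ]
    refine dominates_exp_sub_one ?_ ?_
    · have hgap := (tendsto_expOut hpos hw.1 (by omega) h0).const_mul_atTop
        (sub_pos.2 (hw.2 m hm 0 h0 a b hab hb))
      refine tendsto_atTop_mono' _ ?_ hgap
      filter_upwards [eventually_ge_atTop 0] with x hx
      rw [← sum_sub_distrib]
      simp only [← sub_mul]
      exact single_le_sum (f := fun j => (w (m + 1) a j - w (m + 1) b j) * expOut n w m j x)
        (fun j hj => mul_nonneg (sub_pos.2 (hw.2 m hm j (mem_range.1 hj) a b hab hb)).le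
          (expOut_nonneg hw.weight_nonneg (by omega) (mem_range.1 hj) hx))
        (mem_range.2 h0)
    · filter_upwards [eventually_ge_atTop 0] with x hx
      exact sum_mul_expOut_nonneg hw.weight_nonneg (by omega)
        (fun j hj => hw.weight_nonneg m hm b hb j hj) hx

theorem dominates_expOut_succ_zero (hw : Wo L n w) (hw' : Wo L n w') {m : ℕ} (hm : m < L)
    (h0 : 0 < n (m + 1)) {i : ℕ} (hi : i < n m)
    (hrows : ∀ i' < i, expOut n w m i' = expOut n w' m i')
    (hv : ∀ i' < i, w (m + 1) 0 i' = w' (m + 1) 0 i')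
    (hdom : Dominates (expOut n w m i) (expOut n w' m i)) :
    Dominates (expOut n w (m + 1) 0) (expOut n w' (m + 1) 0) := by
  rw [expOut_succ, expOut_succ]
  refine dominates_exp_sub_one ?_ ?_
  · set C := ∑ k ∈ Ico i (n m), w' (m + 1) 0 k
    refine tendsto_atTop_mono' _ ?_ (hdom.tendsto_const_mul_add (hw.1 m hm 0 h0 i hi) (-C))
    filter_upwards [eventually_ge_atTop 0] with x hx
    rw [sum_range_sub_sum_range_eq_sum_Ico hi.le
      fun k hk => by rw [hv k hk, hrows k hk], sum_sub_distrib]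
    have hw_lower : w (m + 1) 0 i * expOut n w m i x ≤
        ∑ k ∈ Ico i (n m), w (m + 1) 0 k * expOut n w m k x :=
      single_le_sum (f := fun k => w (m + 1) 0 k * expOut n w m k x)
        (fun k hk => mul_nonneg (hw.weight_nonneg m hm 0 h0 k (mem_Ico.1 hk).2)
          (expOut_nonneg hw.weight_nonneg hm.le (mem_Ico.1 hk).2 hx))
        (left_mem_Ico.2 hi)
    have hw'_upper : ∑ k ∈ Ico i (n m), w' (m + 1) 0 k * expOut n w' m k x ≤
        C * expOut n w' m i x := by
      rw [sum_mul]
      gcongr with k hk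
      · exact hw'.weight_nonneg m hm 0 h0 k (mem_Ico.1 hk).2
      · exact expOut_antitone hw' hm.le (mem_Ico.1 hk).1 (mem_Ico.1 hk).2 hx
    linarith
  · filter_upwards [eventually_ge_atTop 0] with x hx
    exact sum_mul_expOut_nonneg hw'.weight_nonneg hm.le (hw'.weight_nonneg m hm 0 h0) hx

theorem dominates_expOut_zero_of_le (hpos : ∀ l ≤ L, 0 < n l) (hw : Wo L n w)
    (hw' : Wo L n w') {m m' : ℕ} (hmm' : m ≤ m') (hm' : m' ≤ L)
    (hdom : Dominates (expOut n w m 0) (expOut n w' m 0)) :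
    Dominates (expOut n w m' 0) (expOut n w' m' 0) := by
  induction m', hmm' using Nat.le_induction with
  | base => exact hdom
  | succ k hk ih =>
    exact dominates_expOut_succ_zero hw hw' hm' (hpos _ hm') (hpos k (by omega))
      (by simp) (by simp) (ih (by omega))

theorem dominates_expOut_of_weight_lt (hn0 : n 0 = 1) (hpos : ∀ l ≤ L, 0 < n l)
    (hw : Wo L n w) (hw' : Wo L n w') {l : ℕ} (hl : l < L) {i : ℕ} (hi : i < n (l + 1))
    {j : ℕ} (hj : j < n l) (hlow : ∀ k < n l, expOut n w l k = expOut n w' l k)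
    (hrow : ∀ j' < j, w (l + 1) i j' = w' (l + 1) i j') (hlt : w' (l + 1) i j < w (l + 1) i j) :
    Dominates (expOut n w (l + 1) i) (expOut n w' (l + 1) i) := by
  have hw'_out : expOut n w' (l + 1) i =
      fun x => exp (∑ k ∈ range (n l), w' (l + 1) i k * expOut n w l k x) - 1 := by
    funext x
    simp only [expOut_succ]
    congr 2
    exact sum_congr rfl fun k hk => by rw [hlow k (mem_range.1 hk)]
  rw [hw'_out, expOut_succ]
  refine dominates_exp_sub_one ?_ ?_
  · have hgap : ∀ x, ∑ k ∈ range (n l), w (l + 1) i k * expOut n w l k x -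
        ∑ k ∈ range (n l), w' (l + 1) i k * expOut n w l k x =
        (w (l + 1) i j - w' (l + 1) i j) * expOut n w l j x +
        ∑ k ∈ Ico (j + 1) (n l), (w (l + 1) i k - w' (l + 1) i k) * expOut n w l k x := by
      intro x
      rw [sum_range_sub_sum_range_eq_sum_Ico hj.le fun k hk => by rw [hrow k hk],
        sum_eq_sum_Ico_succ_bot hj]
      simp only [← sub_mul]
    have htail : Dominates (expOut n w l j) fun x =>
        ∑ k ∈ Ico (j + 1) (n l), (w (l + 1) i k - w' (l + 1) i k) * expOut n w l k x :=
      .sum (tendsto_expOut hpos hw.1 hl.le hj) fun k hk =>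
        (dominates_expOut_of_lt hn0 hpos hw hl.le (mem_Ico.1 hk).1 (mem_Ico.1 hk).2).const_mul _
    simpa only [hgap, one_mul] using htail.tendsto_const_mul_add (sub_pos.2 hlt) 1
  · filter_upwards [eventually_ge_atTop 0] with x hx
    exact sum_mul_expOut_nonneg hw.weight_nonneg hl.le (hw'.weight_nonneg l hl i hi) hx

theorem weight_le_of_expOut_eq (hn0 : n 0 = 1) (hpos : ∀ l ≤ L, 0 < n l) (hw : Wo L n w)
    (hw' : Wo L n w') (hF : ∀ x, expOut n w L 0 x = expOut n w' L 0 x) {l : ℕ}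
    (hl : l + 1 < L) {i : ℕ} (hi : i < n (l + 1)) {j : ℕ} (hj : j < n l)
    (h1 : ∀ i' < i, w (l + 2) 0 i' = w' (l + 2) 0 i')
    (h2 : ∀ i' < i, ∀ j' < n l, w (l + 1) i' j' = w' (l + 1) i' j')
    (h3 : ∀ j' < j, w (l + 1) i j' = w' (l + 1) i j')
    (h4 : ∀ m < l, ∀ k < n (m + 1), ∀ k' < n m, w (m + 1) k k' = w' (m + 1) k k') :
    w (l + 1) i j ≤ w' (l + 1) i j := by
  by_contra! hlt
  have hlow : ∀ k < n l, expOut n w l k = expOut n w' l k := fun k hk => expOut_congr h4 le_rfl hk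
  have hrows : ∀ i' < i, expOut n w (l + 1) i' = expOut n w' (l + 1) i' := fun i' hi' =>
    expOut_succ_congr hlow (h2 i' hi')
  have hdom_i := dominates_expOut_of_weight_lt hn0 hpos hw hw' (by omega) hi hj hlow h3 hlt
  have hdom_sink := dominates_expOut_zero_of_le hpos hw hw' hl le_rfl
    (dominates_expOut_succ_zero hw hw' hl (hpos _ hl) hi hrows h1 hdom_i)
  rw [show expOut n w L 0 = expOut n w' L 0 from funext hF] at hdom_sink
  exact not_dominates_self _ hdom_sink

end Network

theorem stmt_15_general (L : ℕ) (n : ℕ → ℕ) (hn0 : n 0 = 1)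
    (hpos : ∀ l ≤ L, 0 < n l)
    (w w' : ℕ → ℕ → ℕ → ℝ) (hw : Wo L n w) (hw' : Wo L n w')
    (hF : ∀ x : ℝ, expOut n w L 0 x = expOut n w' L 0 x)
    (l : ℕ) (hl1 : 1 ≤ l) (hlL : l < L)
    (i : ℕ) (hi : i < n l) (j : ℕ) (hj : j < n (l - 1))
    (h1 : ∀ i' < i, w (l + 1) 0 i' = w' (l + 1) 0 i')
    (h2 : ∀ i' < i, ∀ j' < n (l - 1), w l i' j' = w' l i' j')
    (h3 : ∀ j' < j, w l i j' = w' l i j')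
    (h4 : ∀ l', 1 ≤ l' → l' < l → ∀ k < n l', ∀ k' < n (l' - 1),
      w l' k k' = w' l' k k') :
    w l i j = w' l i j := by
  obtain ⟨l, rfl⟩ : ∃ m, l = m + 1 := ⟨l - 1, by omega⟩
  have h4' : ∀ m < l, ∀ k < n (m + 1), ∀ k' < n m, w (m + 1) k k' = w' (m + 1) k k' :=
    fun m hm => h4 (m + 1) (by omega) (by omega)
  exact le_antisymm (weight_le_of_expOut_eq hn0 hpos hw hw' hF hlL hi hj h1 h2 h3 h4')
    (weight_le_of_expOut_eq hn0 hpos hw' hw (fun x => (hF x).symm) hlL hi hj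
      (fun i' hi' => (h1 i' hi').symm) (fun i' hi' j' hj' => (h2 i' hi' j' hj').symm)
      (fun j' hj' => (h3 j' hj').symm) (fun m hm k hk k' hk' => (h4' m hm k hk k' hk').symm))

/-- **(Recursive identification step, later rows, eq. rec_cond2).** Let a fully-connected
layered feed-forward network of depth `L ≥ 1` with one source and one sink have activation
`f x = e^x - 1`, and let `W, W̃ ∈ W_o` have the same measured function. Fix a layer
`l ∈ {1, …, L-1}`, a node `i` of layer `l` with `i > 1` (0-indexed: `0 < i`), and a node `j`
of layer `l - 1`. If the next-layer first-row weights `w^{l+1}_{1 i'}` and the weights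
`w^l_{i' j'}` agree for all `i' < i` and all `j' ∈ N^{l-1}`, the weights `w^l_{i j'}` agree
for all `j' < j`, and all weights of layers `l' < l` agree, then `w^l_{i j} = w̃^l_{i j}`.
(Nodes are 0-indexed, so the first row is `i' = 0`.) -/
theorem stmt_15 (L : ℕ) (hL : 1 ≤ L) (n : ℕ → ℕ) (hn0 : n 0 = 1) (hnL : n L = 1)
    (hpos : ∀ l ≤ L, 0 < n l)
    (w w' : ℕ → ℕ → ℕ → ℝ) (hw : Wo L n w) (hw' : Wo L n w')
    (hF : ∀ x : ℝ, expOut n w L 0 x = expOut n w' L 0 x)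
    (l : ℕ) (hl1 : 1 ≤ l) (hlL : l < L)
    (i : ℕ) (hi0 : 0 < i) (hi : i < n l) (j : ℕ) (hj : j < n (l - 1))
    (h1 : ∀ i' < i, w (l + 1) 0 i' = w' (l + 1) 0 i')
    (h2 : ∀ i' < i, ∀ j' < n (l - 1), w l i' j' = w' l i' j')
    (h3 : ∀ j' < j, w l i j' = w' l i j')
    (h4 : ∀ l', 1 ≤ l' → l' < l → ∀ k < n l', ∀ k' < n (l' - 1),
      w l' k k' = w' l' k k') :
    w l i j = w' l i j :=
  stmt_15_general L n hn0 hpos w w' hw hw' hF l hl1 hlL i hi j hj h1 h2 h3 h4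
end
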